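/- For every finite connected loopless multigraph G, gon(G) ≤ g(G) + 1, where g(G) = |E(G)| − |V(G)| + 1. -/

import Mathlib

open Finset

/-- A finite loopless multigraph on a vertex type `V`, given by a symmetric
edge-multiplicity function with zero diagonal. -/
structure Multigraph (V : Type) [Fintype V] [DecidableEq V] where
  m : V → V → ℕ
  symm : ∀ u v, m u v = m v u
  loopless : ∀ v, m v v = 0

namespace Multigraph

variable {V : Type} [Fintype V] [DecidableEq V] (G : Multigraph V)

/-- The underlying simple graph: adjacent iff joined by at least one edge. -/
def toSimpleGraph : SimpleGraph V where
  Adj u v := 0 < G.m u v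
  symm := by
    constructor
    intro u v h
    beta_reduce at h ⊢
    rw [G.symm v u]
    exact h
  loopless := by
    constructor
    intro v h
    beta_reduce at h
    rw [G.loopless v] at h
    exact lt_irrefl 0 h

/-- A multigraph is connected if its underlying simple graph is. -/
def Connected : Prop := G.toSimpleGraph.Connected

/-- The valence of a vertex: the number of edges incident to it. -/
def val (v : V) : ℕ := ∑ w, G.m v w

end Multigraph

/-- The degree of a divisor: the sum of its values. -/
def Divisor.deg {V : Type} [Fintype V] (D : V → ℤ) : ℤ := ∑ v, D v

/-- A divisor is effective if all its values are nonnegative. -/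
def Divisor.Effective {V : Type} (D : V → ℤ) : Prop := ∀ v, 0 ≤ D v

namespace Multigraph

variable {V : Type} [Fintype V] [DecidableEq V] (G : Multigraph V)

/-- The result of firing the vertex `v`: `v` loses its valence many chips, and
every other vertex `w` gains `m v w` chips. -/
def fire (v : V) (D : V → ℤ) : V → ℤ :=
  fun w => D w + (G.m v w : ℤ) - if w = v then (G.val v : ℤ) else 0

/-- Two divisors are equivalent if one is obtained from the other by a finite
sequence of firing moves. -/
def Equivalent (D D' : V → ℤ) : Prop :=
  Relation.ReflTransGen (fun A B => ∃ v, B = G.fire v A) D D'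

/-- A divisor `D` wins the Gonality Game if for every vertex `q`, the divisor
`D - 1_q` is equivalent to an effective divisor. -/
def Winning (D : V → ℤ) : Prop :=
  ∀ q : V, ∃ D' : V → ℤ,
    G.Equivalent (fun w => D w - if w = q then 1 else 0) D' ∧ Divisor.Effective D'

/-- The gonality of `G`: the minimum degree of an effective divisor that wins
the Gonality Game. -/
noncomputable def gonality : ℕ :=
  sInf {n : ℕ | ∃ D : V → ℤ, Divisor.Effective D ∧ G.Winning D ∧ Divisor.deg D = (n : ℤ)}

end Multigraph

/-- The multigraph associated to a simple graph: one edge for each adjacency. -/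
def Multigraph.ofSimpleGraph {V : Type} [Fintype V] [DecidableEq V]
    (G : SimpleGraph V) [DecidableRel G.Adj] : Multigraph V where
  m u v := if G.Adj u v then 1 else 0
  symm := by
    intro u v
    by_cases h : G.Adj u v
    · simp [h, h.symm]
    · have h' : ¬ G.Adj v u := fun hvu => h hvu.symm
      simp [h, h']
  loopless := by intro v; simp

namespace Multigraph

variable {V : Type} [Fintype V] [DecidableEq V] (G : Multigraph V)

/-- The rank of a divisor `D`: the largest integer `r` such that for every
effective divisor `E` of degree `r`, the divisor `D - E` is equivalent to an
effective divisor.  (Every `r ≤ -1` satisfies the condition vacuously, so the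
rank is `-1` exactly when `D` itself is not equivalent to an effective
divisor.) -/
noncomputable def rank (D : V → ℤ) : ℤ :=
  sSup {r : ℤ | ∀ E : V → ℤ, Divisor.Effective E → Divisor.deg E = r →
    ∃ F : V → ℤ, G.Equivalent (fun v => D v - E v) F ∧ Divisor.Effective F}

/-- The number of edges of `G`. -/
def numEdges : ℕ := (∑ u : V, ∑ v : V, G.m u v) / 2

/-- The genus (first Betti number) of `G`: `|E(G)| - |V(G)| + 1`. -/
def genus : ℤ := (G.numEdges : ℤ) - (Fintype.card V : ℤ) + 1

/-- The canonical divisor of `G`: `val(v) - 2` chips on each vertex `v`. -/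
def canonical : V → ℤ := fun v => (G.val v : ℤ) - 2

end Multigraph
namespace GonAux

open Multigraph

variable {V : Type} [Fintype V] [DecidableEq V] (G : Multigraph V)

lemma deg_fire (v : V) (D : V → ℤ) : Divisor.deg (G.fire v D) = Divisor.deg D := by
  unfold Divisor.deg Multigraph.fire
  rw [Finset.sum_sub_distrib, Finset.sum_add_distrib]
  have h1 : ∑ w : V, (if w = v then (G.val v : ℤ) else 0) = (G.val v : ℤ) := by
    simp
  have h2 : ∑ w : V, (G.m v w : ℤ) = (G.val v : ℤ) := by
    unfold Multigraph.val; push_cast; rfl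
  rw [h1, h2]; ring

lemma deg_of_equiv {D D' : V → ℤ} (h : G.Equivalent D D') :
    Divisor.deg D' = Divisor.deg D := by
  induction h with
  | refl => rfl
  | tail _ hstep ih =>
      obtain ⟨v, rfl⟩ := hstep
      rw [deg_fire]; exact ih

/-- The result of firing every vertex of `S` once. -/
def fireSet (S : Finset V) (D : V → ℤ) : V → ℤ :=
  fun w => D w + (∑ v ∈ S, (G.m v w : ℤ)) - if w ∈ S then (G.val w : ℤ) else 0

lemma equiv_fireSet (S : Finset V) (D : V → ℤ) : G.Equivalent D (fireSet G S D) := by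
  classical
  induction S using Finset.induction_on with
  | empty =>
      have : fireSet G ∅ D = D := by
        funext w; simp [fireSet]
      rw [this]; exact Relation.ReflTransGen.refl
  | @insert a S ha ih =>
      have key : fireSet G (insert a S) D = G.fire a (fireSet G S D) := by
        funext w
        simp only [fireSet, Multigraph.fire, Finset.sum_insert ha, Finset.mem_insert]
        by_cases hw : w = a
        · subst hw
          simp [ha]
          ring
        · by_cases hwS : w ∈ S <;> simp [hw, hwS] <;> ring
      rw [key]
      exact Relation.ReflTransGen.tail ih ⟨a, rfl⟩

lemma dist_lt_card (hG : G.Connected) (v q : V) :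
    G.toSimpleGraph.dist v q < Fintype.card V := by
  have hG' : G.toSimpleGraph.Connected := hG
  obtain ⟨p⟩ := (hG' v q)
  have hpath := p.toPath
  calc G.toSimpleGraph.dist v q ≤ (hpath : G.toSimpleGraph.Walk v q).length :=
        SimpleGraph.dist_le _
    _ < Fintype.card V := hpath.2.length_lt

lemma exists_closer (hG : G.Connected) {v q : V} (hvq : v ≠ q) :
    ∃ u, G.toSimpleGraph.Adj v u ∧
      G.toSimpleGraph.dist u q + 1 = G.toSimpleGraph.dist v q := by
  have hG' : G.toSimpleGraph.Connected := hG
  have hpos : 0 < G.toSimpleGraph.dist v q := hG'.pos_dist_of_ne hvq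
  obtain ⟨p, hp⟩ := (hG' v q).exists_walk_length_eq_dist
  cases p with
  | nil => exact absurd rfl hvq
  | @cons _ u _ h p' =>
    refine ⟨u, h, ?_⟩
    have h1 : G.toSimpleGraph.dist u q ≤ p'.length := SimpleGraph.dist_le p'
    obtain ⟨p'', hp''⟩ := (hG' u q).exists_walk_length_eq_dist
    have h2 : G.toSimpleGraph.dist v q ≤ G.toSimpleGraph.dist u q + 1 := by
      have := SimpleGraph.dist_le (SimpleGraph.Walk.cons h p'')
      simpa [hp''] using this
    simp only [SimpleGraph.Walk.length_cons] at hp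
    omega

lemma total_ge (hG : G.Connected) :
    2 * (Fintype.card V - 1) ≤ ∑ u : V, ∑ w : V, G.m u w := by
  classical
  have hG' : G.toSimpleGraph.Connected := hG
  have hne : Nonempty V := hG'.nonempty
  obtain ⟨q⟩ := hne
  have hf : ∀ v : V, ∃ u, v ≠ q → (G.toSimpleGraph.Adj v u ∧
      G.toSimpleGraph.dist u q + 1 = G.toSimpleGraph.dist v q) := by
    intro v
    by_cases hv : v = q
    · exact ⟨q, fun h => absurd hv h⟩
    · obtain ⟨u, hu⟩ := exists_closer G hG hv
      exact ⟨u, fun _ => hu⟩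
  choose f hfspec using hf
  set P1 : Finset (V × V) := (Finset.univ.erase q).image (fun v => (v, f v)) with hP1
  set P2 : Finset (V × V) := (Finset.univ.erase q).image (fun v => (f v, v)) with hP2
  have hmemd : ∀ v : V, v ∈ Finset.univ.erase q → v ≠ q := by
    intro v hv; exact (Finset.mem_erase.mp hv).1
  have hdisj : Disjoint P1 P2 := by
    rw [Finset.disjoint_left]
    rintro ⟨a, b⟩ h1 h2
    simp only [hP1, hP2, Finset.mem_image] at h1 h2
    obtain ⟨v, hv, hv2⟩ := h1
    obtain ⟨w, hw, hw2⟩ := h2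
    simp only [Prod.mk.injEq] at hv2 hw2
    have h3 := (hfspec v (hmemd v hv)).2
    have h4 := (hfspec w (hmemd w hw)).2
    have e1 : f v = w := by rw [hv2.2, ← hw2.2]
    have e2 : f w = v := by rw [hw2.1, ← hv2.1]
    rw [e1] at h3
    rw [e2] at h4
    omega
  have hcard1 : P1.card = Fintype.card V - 1 := by
    rw [hP1, Finset.card_image_of_injective _ (fun x y h => (Prod.ext_iff.mp h).1)]
    simp [Finset.card_erase_of_mem]
  have hcard2 : P2.card = Fintype.card V - 1 := by
    rw [hP2, Finset.card_image_of_injective _ (fun x y h => (Prod.ext_iff.mp h).2)]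
    simp [Finset.card_erase_of_mem]
  have hone : ∀ p ∈ P1 ∪ P2, 1 ≤ G.m p.1 p.2 := by
    intro p hp
    rcases Finset.mem_union.mp hp with hp | hp
    · simp only [hP1, Finset.mem_image] at hp
      obtain ⟨v, hv, rfl⟩ := hp
      exact (hfspec v (hmemd v hv)).1
    · simp only [hP2, Finset.mem_image] at hp
      obtain ⟨v, hv, rfl⟩ := hp
      have := (hfspec v (hmemd v hv)).1
      simp only [Multigraph.toSimpleGraph] at this ⊢
      rw [G.symm]
      exact this
  calc 2 * (Fintype.card V - 1) = (P1 ∪ P2).card := by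
        rw [Finset.card_union_of_disjoint hdisj, hcard1, hcard2]; omega
    _ ≤ ∑ p ∈ P1 ∪ P2, G.m p.1 p.2 := by
        have := Finset.card_nsmul_le_sum (P1 ∪ P2) (fun p => G.m p.1 p.2) 1 hone
        simpa using this
    _ ≤ ∑ p ∈ Finset.univ ×ˢ Finset.univ, G.m p.1 p.2 :=
        Finset.sum_le_sum_of_subset (by intro p _; simp)
    _ = ∑ u : V, ∑ w : V, G.m u w := Finset.sum_product _ _ _

lemma counting (q : V) (E : V → ℤ)
    (hred : ∀ S : Finset V, S ⊆ Finset.univ.erase q → S.Nonempty →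
       ∃ v ∈ S, E v < ∑ w ∈ Sᶜ, (G.m v w : ℤ)) :
    ∀ S : Finset V, S ⊆ Finset.univ.erase q →
      2 * ∑ v ∈ S, E v ≤ (∑ u ∈ S, ∑ w ∈ S, (G.m u w : ℤ))
        + 2 * (∑ u ∈ S, ∑ w ∈ Sᶜ, (G.m u w : ℤ)) - 2 * (S.card : ℤ) := by
  classical
  intro S
  induction S using Finset.strongInduction with
  | _ S ih =>
    intro hSq
    rcases S.eq_empty_or_nonempty with rfl | hSne
    · simp
    obtain ⟨v, hvS, hv⟩ := hred S hSq hSne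
    have ih' := ih (S.erase v) (Finset.erase_ssubset hvS)
      ((Finset.erase_subset v S).trans hSq)
    set S' := S.erase v with hS'
    have split : ∀ h : V → ℤ, ∑ w ∈ S, h w = h v + ∑ w ∈ S', h w :=
      fun h => (Finset.add_sum_erase S h hvS).symm
    have hcompl : (S'ᶜ : Finset V) = insert v Sᶜ := by
      rw [hS', Finset.compl_erase]
    have hvnc : v ∉ (Sᶜ : Finset V) := by simp [hvS]
    have hsymmrow : ∀ T : Finset V, ∑ u ∈ T, (G.m u v : ℤ) = ∑ w ∈ T, (G.m v w : ℤ) :=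
      fun T => Finset.sum_congr rfl (fun u _ => by rw [G.symm])
    have hW : ∑ u ∈ S, ∑ w ∈ S, (G.m u w : ℤ)
        = (∑ u ∈ S', ∑ w ∈ S', (G.m u w : ℤ)) + 2 * ∑ w ∈ S', (G.m v w : ℤ) := by
      rw [split (fun u => ∑ w ∈ S, (G.m u w : ℤ))]
      rw [split (fun w => (G.m v w : ℤ))]
      have : ∀ u ∈ S', ∑ w ∈ S, (G.m u w : ℤ)
          = (G.m u v : ℤ) + ∑ w ∈ S', (G.m u w : ℤ) :=
        fun u _ => split (fun w => (G.m u w : ℤ))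
      rw [Finset.sum_congr rfl this, Finset.sum_add_distrib, hsymmrow]
      simp [G.loopless]
      ring
    have hB : ∑ u ∈ S', ∑ w ∈ S'ᶜ, (G.m u w : ℤ)
        = (∑ w ∈ S', (G.m v w : ℤ)) + ∑ u ∈ S', ∑ w ∈ Sᶜ, (G.m u w : ℤ) := by
      have : ∀ u ∈ S', ∑ w ∈ S'ᶜ, (G.m u w : ℤ)
          = (G.m u v : ℤ) + ∑ w ∈ Sᶜ, (G.m u w : ℤ) := by
        intro u _
        rw [hcompl, Finset.sum_insert hvnc]
      rw [Finset.sum_congr rfl this, Finset.sum_add_distrib, hsymmrow]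
    have hB2 : ∑ u ∈ S, ∑ w ∈ Sᶜ, (G.m u w : ℤ)
        = (∑ w ∈ Sᶜ, (G.m v w : ℤ)) + ∑ u ∈ S', ∑ w ∈ Sᶜ, (G.m u w : ℤ) :=
      split (fun u => ∑ w ∈ Sᶜ, (G.m u w : ℤ))
    have hE : ∑ x ∈ S, E x = E v + ∑ x ∈ S', E x := split E
    have hcard : (S.card : ℤ) = (S'.card : ℤ) + 1 := by
      rw [hS', Finset.card_erase_of_mem hvS]
      have : 1 ≤ S.card := Finset.card_pos.mpr hSne
      push_cast [Nat.cast_sub this]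
      ring
    rw [hE, hW, hB2, hcard]
    rw [hB] at ih'
    linarith [hv, ih']

lemma counting_total (q : V) (E : V → ℤ)
    (hred : ∀ S : Finset V, S ⊆ Finset.univ.erase q → S.Nonempty →
       ∃ v ∈ S, E v < ∑ w ∈ Sᶜ, (G.m v w : ℤ)) :
    2 * ∑ v ∈ Finset.univ.erase q, E v
      ≤ (∑ u : V, ∑ w : V, (G.m u w : ℤ)) - 2 * ((Fintype.card V : ℤ) - 1) := by
  classical
  have h := counting G q E hred (Finset.univ.erase q) (le_refl _)
  set S₀ : Finset V := Finset.univ.erase q with hS₀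
  have hcompl : (S₀ᶜ : Finset V) = {q} := by
    rw [hS₀, Finset.compl_erase]
    simp
  have hqmem : q ∈ (Finset.univ : Finset V) := Finset.mem_univ q
  have split : ∀ h : V → ℤ, ∑ w : V, h w = h q + ∑ w ∈ S₀, h w :=
    fun h => (Finset.add_sum_erase Finset.univ h hqmem).symm
  have hsymmrow : ∑ u ∈ S₀, (G.m u q : ℤ) = ∑ w ∈ S₀, (G.m q w : ℤ) :=
    Finset.sum_congr rfl (fun u _ => by rw [G.symm])
  have ht : ∑ u : V, ∑ w : V, (G.m u w : ℤ)
      = (∑ u ∈ S₀, ∑ w ∈ S₀, (G.m u w : ℤ))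
        + 2 * ∑ u ∈ S₀, ∑ w ∈ S₀ᶜ, (G.m u w : ℤ) := by
    rw [split (fun u => ∑ w : V, (G.m u w : ℤ)), split (fun w => (G.m q w : ℤ))]
    have : ∀ u ∈ S₀, ∑ w : V, (G.m u w : ℤ)
        = (G.m u q : ℤ) + ∑ w ∈ S₀, (G.m u w : ℤ) :=
      fun u _ => split (fun w => (G.m u w : ℤ))
    rw [Finset.sum_congr rfl this, Finset.sum_add_distrib, hsymmrow]
    have hBq : ∑ u ∈ S₀, ∑ w ∈ S₀ᶜ, (G.m u w : ℤ) = ∑ u ∈ S₀, (G.m u q : ℤ) := by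
      rw [hcompl]
      simp
    rw [hBq, hsymmrow]
    simp [G.loopless]
    ring
  have hcard : (S₀.card : ℤ) = (Fintype.card V : ℤ) - 1 := by
    rw [hS₀, Finset.card_erase_of_mem hqmem]
    have : 1 ≤ Fintype.card V := Fintype.card_pos_iff.mpr ⟨q⟩
    push_cast [Nat.cast_sub this, Finset.card_univ]
    ring
  rw [ht]
  rw [hcard] at h
  linarith [h]
/-- Exponential weights used for the monovariant. -/
noncomputable def wt (q v : V) : ℤ :=
  ((∑ u : V, ∑ w : V, G.m u w : ℕ) + 2 : ℤ) ^
    (Fintype.card V - G.toSimpleGraph.dist v q)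

lemma wt_pos (q v : V) : 0 < wt G q v := by
  apply pow_pos
  positivity

lemma one_le_C : (1:ℤ) ≤ ((∑ u : V, ∑ w : V, G.m u w : ℕ) + 2 : ℤ) := by
  have : (0:ℤ) ≤ ((∑ u : V, ∑ w : V, G.m u w : ℕ) : ℤ) := Int.natCast_nonneg _
  linarith

lemma phi_gain (hG : G.Connected) (q : V) (S : Finset V)
    (hSq : S ⊆ Finset.univ.erase q) (hSne : S.Nonempty) (E : V → ℤ) :
    ∑ v : V, E v * wt G q v < ∑ v : V, fireSet G S E v * wt G q v := by
  classical
  have hG' : G.toSimpleGraph.Connected := hG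
  set C : ℤ := ((∑ u : V, ∑ w : V, G.m u w : ℕ) + 2 : ℤ) with hC
  set n : ℕ := Fintype.card V with hn
  have hCle : (1:ℤ) ≤ C := one_le_C G
  have hwt : ∀ v, wt G q v = C ^ (n - G.toSimpleGraph.dist v q) := fun v => rfl
  -- step (a): the difference is the boundary flow
  have ha : ∑ v : V, fireSet G S E v * wt G q v - ∑ v : V, E v * wt G q v
      = ∑ v ∈ S, ∑ w : V, (G.m v w : ℤ) * (wt G q w - wt G q v) := by
    rw [← Finset.sum_sub_distrib]
    have e1 : ∀ v : V, fireSet G S E v * wt G q v - E v * wt G q v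
        = (∑ u ∈ S, (G.m u v : ℤ)) * wt G q v
          - (if v ∈ S then (G.val v : ℤ) * wt G q v else 0) := by
      intro v
      simp only [fireSet]
      by_cases h : v ∈ S <;> simp [h] <;> ring
    rw [Finset.sum_congr rfl (fun v _ => e1 v), Finset.sum_sub_distrib]
    have e2 : ∑ v : V, (∑ u ∈ S, (G.m u v : ℤ)) * wt G q v
        = ∑ u ∈ S, ∑ v : V, (G.m u v : ℤ) * wt G q v := by
      rw [Finset.sum_comm]
      exact Finset.sum_congr rfl (fun v _ => Finset.sum_mul _ _ _)
    have e3 : ∑ v : V, (if v ∈ S then (G.val v : ℤ) * wt G q v else 0)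
        = ∑ v ∈ S, (G.val v : ℤ) * wt G q v := by
      rw [Finset.sum_ite_mem, Finset.univ_inter]
    rw [e2, e3]
    rw [← Finset.sum_sub_distrib]
    refine Finset.sum_congr rfl (fun v _ => ?_)
    have e4 : (G.val v : ℤ) * wt G q v = ∑ w : V, (G.m v w : ℤ) * wt G q v := by
      rw [← Finset.sum_mul]
      congr 1
      unfold Multigraph.val
      push_cast
      rfl
    rw [e4, ← Finset.sum_sub_distrib]
    refine Finset.sum_congr rfl (fun w _ => ?_)
    ring
  -- step (b): interior flow cancels
  have hb : ∑ v ∈ S, ∑ w : V, (G.m v w : ℤ) * (wt G q w - wt G q v)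
      = ∑ p ∈ S ×ˢ (Sᶜ : Finset V), (G.m p.1 p.2 : ℤ) * (wt G q p.2 - wt G q p.1) := by
    have hzero : ∑ p ∈ S ×ˢ S, (G.m p.1 p.2 : ℤ) * (wt G q p.2 - wt G q p.1) = 0 := by
      apply Finset.sum_involution (g := fun p _ => (p.2, p.1))
      · rintro ⟨x, y⟩ _
        simp only []
        rw [G.symm y x]
        ring
      · rintro ⟨x, y⟩ _ hfne heq
        simp only [Prod.mk.injEq] at heq
        apply hfne
        rw [heq.1]
        simp [G.loopless]
      · rintro ⟨x, y⟩ hp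
        simp only [Finset.mem_product] at hp ⊢
        exact ⟨hp.2, hp.1⟩
      · rintro ⟨x, y⟩ _
        rfl
    have hsplit : ∀ v ∈ S, ∑ w : V, (G.m v w : ℤ) * (wt G q w - wt G q v)
        = (∑ w ∈ S, (G.m v w : ℤ) * (wt G q w - wt G q v))
          + ∑ w ∈ (Sᶜ : Finset V), (G.m v w : ℤ) * (wt G q w - wt G q v) := by
      intro v _
      rw [Finset.sum_add_sum_compl]
    rw [Finset.sum_congr rfl hsplit, Finset.sum_add_distrib]
    rw [← Finset.sum_product', ← Finset.sum_product', hzero, zero_add]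
  rw [← sub_pos, ha, hb]
  -- step (c): the boundary flow is positive
  obtain ⟨v0, hv0S, hv0min⟩ := S.exists_min_image (fun v => G.toSimpleGraph.dist v q) hSne
  have hv0q : v0 ≠ q := (Finset.mem_erase.mp (hSq hv0S)).1
  have hd0pos : 1 ≤ G.toSimpleGraph.dist v0 q := hG'.pos_dist_of_ne hv0q
  obtain ⟨u0, hadj, hdist⟩ := exists_closer G hG hv0q
  have hv0min' : ∀ x ∈ S, G.toSimpleGraph.dist v0 q ≤ G.toSimpleGraph.dist x q :=
    fun x hx => hv0min x hx
  have hu0S : u0 ∉ S := by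
    intro hu0
    have := hv0min' u0 hu0
    omega
  have hp0 : (v0, u0) ∈ S ×ˢ (Sᶜ : Finset V) := by
    simp only [Finset.mem_product, Finset.mem_compl]
    exact ⟨hv0S, hu0S⟩
  set k : ℕ := n - G.toSimpleGraph.dist v0 q with hk
  have hdlt : G.toSimpleGraph.dist v0 q < n := dist_lt_card G hG v0 q
  have hwtv0 : wt G q v0 = C ^ k := rfl
  have hwtu0 : wt G q u0 = C ^ (k + 1) := by
    rw [hwt]
    congr 1
    simp only [hk]
    omega
  have hrest : ∀ p ∈ (S ×ˢ (Sᶜ : Finset V)).erase (v0, u0),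
      -((G.m p.1 p.2 : ℤ) * C ^ k) ≤ (G.m p.1 p.2 : ℤ) * (wt G q p.2 - wt G q p.1) := by
    rintro ⟨x, y⟩ hp
    have hxS : x ∈ S := (Finset.mem_product.mp (Finset.mem_of_mem_erase hp)).1
    have hx : wt G q x ≤ C ^ k := by
      rw [hwt]
      apply pow_le_pow_right₀ hCle
      have := hv0min' x hxS
      omega
    have hy : 0 < wt G q y := wt_pos G q y
    have hm : (0:ℤ) ≤ (G.m x y : ℤ) := Int.natCast_nonneg _
    have : -(C ^ k) ≤ wt G q y - wt G q x := by linarith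
    calc -((G.m x y : ℤ) * C ^ k) = (G.m x y : ℤ) * (-(C ^ k)) := by ring
      _ ≤ (G.m x y : ℤ) * (wt G q y - wt G q x) := by
          exact mul_le_mul_of_nonneg_left this hm
  have hrestsum : -(C ^ k * ((∑ u : V, ∑ w : V, G.m u w : ℕ) : ℤ))
      ≤ ∑ p ∈ (S ×ˢ (Sᶜ : Finset V)).erase (v0, u0),
          (G.m p.1 p.2 : ℤ) * (wt G q p.2 - wt G q p.1) := by
    have h1 : ∑ p ∈ (S ×ˢ (Sᶜ : Finset V)).erase (v0, u0), -((G.m p.1 p.2 : ℤ) * C ^ k)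
        ≤ ∑ p ∈ (S ×ˢ (Sᶜ : Finset V)).erase (v0, u0),
            (G.m p.1 p.2 : ℤ) * (wt G q p.2 - wt G q p.1) :=
      Finset.sum_le_sum hrest
    refine le_trans ?_ h1
    have h2 : ∑ p ∈ (S ×ˢ (Sᶜ : Finset V)).erase (v0, u0), (G.m p.1 p.2 : ℤ)
        ≤ ((∑ u : V, ∑ w : V, G.m u w : ℕ) : ℤ) := by
      have hsub : (S ×ˢ (Sᶜ : Finset V)).erase (v0, u0) ⊆ Finset.univ ×ˢ Finset.univ := by
        intro p _
        simp
      have := Finset.sum_le_sum_of_subset_of_nonneg hsub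
        (fun p _ _ => Int.natCast_nonneg (G.m p.1 p.2))
      refine this.trans ?_
      rw [Finset.sum_product]
      push_cast
      exact le_refl _
    have hCk : (0:ℤ) < C ^ k := pow_pos (by positivity) _
    have h3 : ∑ p ∈ (S ×ˢ (Sᶜ : Finset V)).erase (v0, u0), -((G.m p.1 p.2 : ℤ) * C ^ k)
        = -((∑ p ∈ (S ×ˢ (Sᶜ : Finset V)).erase (v0, u0), (G.m p.1 p.2 : ℤ)) * C ^ k) := by
      rw [Finset.sum_mul, ← Finset.sum_neg_distrib]
    rw [h3]
    nlinarith [h2, hCk]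
  have hgood : C ^ k * ((∑ u : V, ∑ w : V, G.m u w : ℕ) + 1 : ℤ)
      ≤ (G.m v0 u0 : ℤ) * (wt G q u0 - wt G q v0) := by
    have hm1 : (1:ℤ) ≤ (G.m v0 u0 : ℤ) := by
      have : 0 < G.m v0 u0 := hadj
      exact_mod_cast this
    have hwd : wt G q u0 - wt G q v0 = C ^ k * (C - 1) := by
      rw [hwtu0, hwtv0]
      ring
    have hnn : (0:ℤ) ≤ wt G q u0 - wt G q v0 := by
      rw [hwd]
      have hCk : (0:ℤ) < C ^ k := pow_pos (by positivity) _
      nlinarith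
    calc C ^ k * ((∑ u : V, ∑ w : V, G.m u w : ℕ) + 1 : ℤ)
        = C ^ k * (C - 1) := by rw [hC]; ring
      _ = 1 * (wt G q u0 - wt G q v0) := by rw [hwd]; ring
      _ ≤ (G.m v0 u0 : ℤ) * (wt G q u0 - wt G q v0) :=
          mul_le_mul_of_nonneg_right hm1 hnn
  have hsum : ∑ p ∈ S ×ˢ (Sᶜ : Finset V), (G.m p.1 p.2 : ℤ) * (wt G q p.2 - wt G q p.1)
      = (G.m v0 u0 : ℤ) * (wt G q u0 - wt G q v0)
        + ∑ p ∈ (S ×ˢ (Sᶜ : Finset V)).erase (v0, u0),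
            (G.m p.1 p.2 : ℤ) * (wt G q p.2 - wt G q p.1) :=
    (Finset.add_sum_erase _ _ hp0).symm
  have hCk : (0:ℤ) < C ^ k := pow_pos (by positivity) _
  rw [hsum]
  linarith [hgood, hrestsum, hCk]
lemma main (hG : G.Connected) (q : V) (D0 : V → ℤ)
    (h1 : ∀ v, v ≠ q → 0 ≤ D0 v)
    (h2 : (∑ u : V, ∑ w : V, (G.m u w : ℤ)) - 2 * ((Fintype.card V : ℤ) - 1)
          ≤ 2 * Divisor.deg D0 + 1) :
    ∃ E : V → ℤ, G.Equivalent D0 E ∧ Divisor.Effective E := by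
  classical
  set Φ : (V → ℤ) → ℤ := fun E => ∑ v : V, E v * wt G q v with hΦ
  set P : ℤ → Prop :=
    fun z => ∃ E : V → ℤ, (G.Equivalent D0 E ∧ ∀ v, v ≠ q → 0 ≤ E v) ∧ Φ E = z with hP
  have hwtle : ∀ v : V, wt G q v ≤ wt G q q := by
    intro v
    unfold wt
    apply pow_le_pow_right₀ (one_le_C G)
    rw [SimpleGraph.dist_self]
    omega
  have hbdd : ∃ b : ℤ, ∀ z, P z → z ≤ b := by
    refine ⟨Divisor.deg D0 * wt G q q, ?_⟩
    rintro z ⟨E, ⟨hEe, hEeff⟩, rfl⟩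
    have hdeg : Divisor.deg E = Divisor.deg D0 := deg_of_equiv G hEe
    have hsplit : Φ E = E q * wt G q q + ∑ v ∈ Finset.univ.erase q, E v * wt G q v :=
      (Finset.add_sum_erase _ (fun v => E v * wt G q v) (Finset.mem_univ q)).symm
    have hsplitdeg : Divisor.deg E = E q + ∑ v ∈ Finset.univ.erase q, E v :=
      (Finset.add_sum_erase _ E (Finset.mem_univ q)).symm
    have hterm : ∑ v ∈ Finset.univ.erase q, E v * wt G q v
        ≤ ∑ v ∈ Finset.univ.erase q, E v * wt G q q := by
      refine Finset.sum_le_sum (fun v hv => ?_)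
      exact mul_le_mul_of_nonneg_left (hwtle v) (hEeff v (Finset.mem_erase.mp hv).1)
    calc Φ E ≤ E q * wt G q q + ∑ v ∈ Finset.univ.erase q, E v * wt G q q := by
          rw [hsplit]; linarith
      _ = (E q + ∑ v ∈ Finset.univ.erase q, E v) * wt G q q := by
          rw [← Finset.sum_mul]; ring
      _ = Divisor.deg D0 * wt G q q := by rw [← hsplitdeg, hdeg]
  have hinh : ∃ z, P z := ⟨Φ D0, D0, ⟨Relation.ReflTransGen.refl, h1⟩, rfl⟩
  obtain ⟨z, ⟨E, ⟨hEe, hEeff⟩, hEz⟩, hmax⟩ := Int.exists_greatest_of_bdd hbdd hinh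
  have hred : ∀ S : Finset V, S ⊆ Finset.univ.erase q → S.Nonempty →
      ∃ v ∈ S, E v < ∑ w ∈ Sᶜ, (G.m v w : ℤ) := by
    intro S hSq hSne
    by_contra hcon
    push_neg at hcon
    have hE' : G.Equivalent D0 (fireSet G S E) := hEe.trans (equiv_fireSet G S E)
    have heff' : ∀ v, v ≠ q → 0 ≤ fireSet G S E v := by
      intro v hv
      have hsymmrow : ∑ u ∈ S, (G.m u v : ℤ) = ∑ u ∈ S, (G.m v u : ℤ) :=
        Finset.sum_congr rfl (fun u _ => by rw [G.symm])
      by_cases hvS : v ∈ S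
      · have hval : (G.val v : ℤ) = ∑ u ∈ S, (G.m v u : ℤ) + ∑ w ∈ Sᶜ, (G.m v w : ℤ) := by
          unfold Multigraph.val
          push_cast
          rw [Finset.sum_add_sum_compl]
        have hc := hcon v hvS
        simp only [fireSet, if_pos hvS]
        rw [hsymmrow, hval]
        linarith
      · simp only [fireSet, if_neg hvS]
        have hnn : 0 ≤ ∑ u ∈ S, (G.m u v : ℤ) :=
          Finset.sum_nonneg (fun u _ => Int.natCast_nonneg _)
        have := hEeff v hv
        linarith
    have hle := hmax (Φ (fireSet G S E)) ⟨_, ⟨hE', heff'⟩, rfl⟩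
    have hgt := phi_gain G hG q S hSq hSne E
    rw [hΦ] at hle hEz
    simp only at hle hEz
    omega
  have hc := counting_total G q E hred
  have hdeg : Divisor.deg E = Divisor.deg D0 := deg_of_equiv G hEe
  have hsplitdeg : Divisor.deg E = E q + ∑ v ∈ Finset.univ.erase q, E v :=
    (Finset.add_sum_erase _ E (Finset.mem_univ q)).symm
  have hEq : 0 ≤ E q := by
    have h3 : 2 * E q ≥ -1 := by linarith
    omega
  refine ⟨E, hEe, fun v => ?_⟩
  by_cases h : v = q
  · rw [h]; exact hEq
  · exact hEeff v h
end GonAux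


/-- For every finite connected loopless multigraph `G`,
`gon(G) ≤ g(G) + 1`, where `g(G) = |E(G)| - |V(G)| + 1`. -/
theorem gonality_le_genus_add_one {V : Type} [Fintype V] [DecidableEq V]
    (G : Multigraph V) (hG : G.Connected) :
    (G.gonality : ℤ) ≤ G.genus + 1 := by
  classical
  have hG' : G.toSimpleGraph.Connected := hG
  obtain ⟨q0⟩ := hG'.nonempty
  set t : ℕ := ∑ u : V, ∑ w : V, G.m u w with ht
  set n : ℕ := Fintype.card V with hn
  have hnum : G.numEdges = t / 2 := rfl
  have hnpos : 1 ≤ n := Fintype.card_pos_iff.mpr ⟨q0⟩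
  have hlow : 2 * (n - 1) ≤ t := GonAux.total_ge G hG
  have htcast : (∑ u : V, ∑ w : V, (G.m u w : ℤ)) = (t : ℤ) := by
    rw [ht]; push_cast; rfl
  set k : ℕ := t / 2 + 2 - n with hk
  have hk1 : 1 ≤ k := by omega
  set D : V → ℤ := fun w => if w = q0 then (k : ℤ) else 0 with hD
  have hDeff : Divisor.Effective D := by
    intro v
    by_cases h : v = q0 <;> simp [hD, h]
  have hDdeg : Divisor.deg D = (k : ℤ) := by
    simp [Divisor.deg, hD]
  have hwin : G.Winning D := by
    intro q
    by_cases hq : q = q0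
    · subst hq
      refine ⟨_, Relation.ReflTransGen.refl, fun v => ?_⟩
      by_cases h : v = q <;> simp [hD, h]
      omega
    · apply GonAux.main G hG q
      · intro v hv
        simp only [hD]
        by_cases h : v = q0
        · subst h
          rw [if_pos rfl, if_neg (fun h' => hq h'.symm)]
          have := Int.natCast_nonneg k
          omega
        · rw [if_neg h, if_neg hv]
          omega
      · have hdeg : Divisor.deg (fun w => D w - if w = q then 1 else 0) = (k : ℤ) - 1 := by
          unfold Divisor.deg
          rw [Finset.sum_sub_distrib]
          have h1 : ∑ v : V, (if v = q then (1:ℤ) else 0) = 1 := by simp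
          rw [h1, ← Divisor.deg, hDdeg]
        rw [hdeg, htcast, ← hn]
        omega
  have hmem : k ∈ {n : ℕ | ∃ D : V → ℤ,
      Divisor.Effective D ∧ G.Winning D ∧ Divisor.deg D = (n : ℤ)} :=
    ⟨D, hDeff, hwin, hDdeg⟩
  have hle : G.gonality ≤ k := Nat.sInf_le hmem
  have hgen : G.genus = ((t / 2 : ℕ) : ℤ) - (n : ℤ) + 1 := by
    unfold Multigraph.genus
    rw [hnum, ← hn]
  have hkval : (k : ℤ) = G.genus + 1 := by
    rw [hgen, hk]
    omega
  calc (G.gonality : ℤ) ≤ (k : ℤ) := by exact_mod_cast hle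
    _ = G.genus + 1 := hkval
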